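/- arXiv:math/0301383 — 6 statements merged into one kernel-verified Lean document; each statement's English description precedes it below -/
import Mathlib

section
/- Let F : (0,∞) → ℝ be measurable and suppose σ_F(x) := sup_{y ≥ x} |F(y)| is finite for every x > 0 and integrable on (0,∞). Then for every x ≥ 0 and every h ∈ L¹(x,∞), the function y ↦ ∫_x^∞ F(t+y) h(t) dt belongs to L¹(x,∞) and satisfies ∫_x^∞ |∫_x^∞ F(t+y) h(t) dt| dy ≤ σ_{1F}(2x) · ∫_x^∞ |h(t)| dt, where σ_{1F}(x) := ∫_x^∞ σ_F(y) dy. -/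
/-!
Since `|F s| ≤ σ_F(s)` for `s > 0`, the kernel `F` itself is integrable on `(2x, ∞)` with
`∫_{2x}^∞ |F| ≤ σ_{1F}(2x)`. The bound then holds for any kernel integrable on `(a + b, ∞)`:
by Tonelli, `∫_b^∞ ∫_a^∞ |K(t+y)| |h(t)| dt dy = ∫_a^∞ |h(t)| ∫_{t+b}^∞ |K(s)| ds dt`, and for
`t > a` the inner integral is at most `∫_{a+b}^∞ |K|`.
-/

open MeasureTheory Set Filter

/-- `σ_F(x) := sup_{y ≥ x} |F(y)|`. -/
noncomputable def sigmaF (F : ℝ → ℝ) (x : ℝ) : ℝ :=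
  sSup ((fun y => |F y|) '' Set.Ici x)

open scoped ENNReal

/-- The operator `F_x` of the paper is `hankelIoi F x`. -/
noncomputable def hankelIoi (K : ℝ → ℝ) (a : ℝ) (h : ℝ → ℝ) (y : ℝ) : ℝ :=
  ∫ t in Ioi a, K (t + y) * h t

theorem setLIntegral_Ioi_comp_const_add_le {G : ℝ → ℝ≥0∞} (hG : Measurable G) {a t : ℝ}
    (b : ℝ) (ht : a < t) : ∫⁻ y in Ioi b, G (t + y) ≤ ∫⁻ s in Ioi (a + b), G s := by
  have hshift : ∫⁻ y in Ioi b, G (t + y) = ∫⁻ s in Ioi (t + b), G s := by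
    rw [← (measurePreserving_add_left volume t).setLIntegral_comp_preimage measurableSet_Ioi hG,
      preimage_const_add_Ioi, add_sub_cancel_left]
  rw [hshift]
  exact lintegral_mono_set (Ioi_subset_Ioi (by linarith))

theorem lintegral_Ioi_hankel_le {G u : ℝ → ℝ≥0∞} (hG : Measurable G) {a : ℝ}
    (hu : AEMeasurable u (volume.restrict (Ioi a))) (b : ℝ) :
    ∫⁻ y in Ioi b, ∫⁻ t in Ioi a, G (t + y) * u t ≤
      (∫⁻ s in Ioi (a + b), G s) * ∫⁻ t in Ioi a, u t :=
  calc ∫⁻ y in Ioi b, ∫⁻ t in Ioi a, G (t + y) * u t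
      = ∫⁻ t in Ioi a, ∫⁻ y in Ioi b, G (t + y) * u t :=
        lintegral_lintegral_swap <|
          (hG.comp (measurable_snd.add measurable_fst)).aemeasurable.mul hu.comp_snd
    _ = ∫⁻ t in Ioi a, (∫⁻ y in Ioi b, G (t + y)) * u t :=
        lintegral_congr fun t => lintegral_mul_const _ (hG.comp (measurable_const_add t))
    _ ≤ ∫⁻ t in Ioi a, (∫⁻ s in Ioi (a + b), G s) * u t :=
        setLIntegral_mono' measurableSet_Ioi fun _ ht =>
          mul_le_mul_left (setLIntegral_Ioi_comp_const_add_le hG b ht) _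
    _ = (∫⁻ s in Ioi (a + b), G s) * ∫⁻ t in Ioi a, u t := lintegral_const_mul'' _ hu

section HankelIoi

variable {K h : ℝ → ℝ} {a : ℝ}

theorem lintegral_enorm_hankelIoi_le (hK : Measurable K)
    (hh : AEMeasurable h (volume.restrict (Ioi a))) (b : ℝ) :
    ∫⁻ y in Ioi b, ‖hankelIoi K a h y‖ₑ ≤
      (∫⁻ s in Ioi (a + b), ‖K s‖ₑ) * ∫⁻ t in Ioi a, ‖h t‖ₑ :=
  calc ∫⁻ y in Ioi b, ‖hankelIoi K a h y‖ₑ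
      ≤ ∫⁻ y in Ioi b, ∫⁻ t in Ioi a, ‖K (t + y)‖ₑ * ‖h t‖ₑ :=
        lintegral_mono fun y => by
          simpa only [hankelIoi, enorm_mul] using enorm_integral_le_lintegral_enorm fun t => K (t + y) * h t
    _ ≤ _ := lintegral_Ioi_hankel_le hK.enorm hh.enorm b

theorem integrableOn_hankelIoi {b : ℝ} (hK : Measurable K) (hKi : IntegrableOn K (Ioi (a + b)))
    (hh : IntegrableOn h (Ioi a)) : IntegrableOn (hankelIoi K a h) (Ioi b) :=
  ⟨((hK.comp (measurable_snd.add measurable_fst)).aestronglyMeasurable.mul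
      hh.aestronglyMeasurable.comp_snd).integral_prod_right',
    (lintegral_enorm_hankelIoi_le hK hh.aemeasurable b).trans_lt
      (ENNReal.mul_lt_top hKi.2 hh.2)⟩

theorem integral_abs_hankelIoi_le {b : ℝ} (hK : Measurable K) (hKi : IntegrableOn K (Ioi (a + b)))
    (hh : IntegrableOn h (Ioi a)) :
    ∫ y in Ioi b, |hankelIoi K a h y| ≤ (∫ s in Ioi (a + b), |K s|) * ∫ t in Ioi a, |h t| := by
  simp_rw [← Real.norm_eq_abs]
  rw [integral_norm_eq_lintegral_enorm (integrableOn_hankelIoi hK hKi hh).1,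
    integral_norm_eq_lintegral_enorm hKi.1, integral_norm_eq_lintegral_enorm hh.1,
    ← ENNReal.toReal_mul]
  exact ENNReal.toReal_mono (ENNReal.mul_ne_top hKi.2.ne hh.2.ne)
    (lintegral_enorm_hankelIoi_le hK hh.aemeasurable b)

end HankelIoi

theorem abs_le_sigmaF {F : ℝ → ℝ} {x y : ℝ} (hF : BddAbove ((fun y => |F y|) '' Ici x))
    (hxy : x ≤ y) : |F y| ≤ sigmaF F x :=
  le_csSup hF ⟨y, hxy, rfl⟩

/-- if `σ_F` is finite on `(0,∞)` and integrable there, then for every `x ≥ 0`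
and every `h ∈ L¹(x,∞)` the function `y ↦ ∫_x^∞ F(t+y) h(t) dt` is in `L¹(x,∞)` with
`L¹`-norm at most `σ_{1F}(2x) · ‖h‖_{L¹(x,∞)}`. -/
theorem marchenko_operator_L1_bound
    (F : ℝ → ℝ) (hFmeas : Measurable F)
    (hFbdd : ∀ x > (0 : ℝ), BddAbove ((fun y => |F y|) '' Set.Ici x))
    (hσint : IntegrableOn (sigmaF F) (Set.Ioi 0)) :
    ∀ x ≥ (0 : ℝ), ∀ h : ℝ → ℝ, IntegrableOn h (Set.Ioi x) →
      IntegrableOn (fun y => ∫ t in Set.Ioi x, F (t + y) * h t) (Set.Ioi x) ∧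
      (∫ y in Set.Ioi x, |∫ t in Set.Ioi x, F (t + y) * h t|) ≤
        (∫ y in Set.Ioi (2 * x), sigmaF F y) * ∫ t in Set.Ioi x, |h t| := by
  intro x hx h hh
  have hpos : Ioi (x + x) ⊆ Ioi 0 := Ioi_subset_Ioi (by linarith)
  have hσ : IntegrableOn (sigmaF F) (Ioi (x + x)) := hσint.mono_set hpos
  have hdom : ∀ s ∈ Ioi (x + x), |F s| ≤ sigmaF F s := fun s hs =>
    abs_le_sigmaF (hFbdd s (hpos hs)) le_rfl
  have hF : IntegrableOn F (Ioi (x + x)) :=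
    hσ.mono' hFmeas.aestronglyMeasurable (ae_restrict_of_forall_mem measurableSet_Ioi hdom)
  rw [two_mul]
  refine ⟨integrableOn_hankelIoi hFmeas hF hh, (integral_abs_hankelIoi_le hFmeas hF hh).trans ?_⟩
  exact mul_le_mul_of_nonneg_right (setIntegral_mono_on hF.abs hσ measurableSet_Ioi hdom)
    (integral_nonneg fun _ => abs_nonneg _)
end

section
/- Let F : (0,∞) → ℝ be measurable with σ_F(x) := sup_{y ≥ x} |F(y)| finite for all x > 0, let 0 ≤ δ < 1 and x₀ ≥ 0 with σ_{1F}(2x₀) ≤ δ, where σ_{1F}(x) := ∫_x^∞ σ_F(y) dy. Fix x ≥ x₀ and suppose A(x,·) : [x,∞) → ℝ is bounded, measurable, and satisfies the Marchenko equation A(x,y) + ∫_x^∞ A(x,t) F(t+y) dt = −F(x+y) for all y ≥ x. Then σ_A(x) := sup_{y ≥ x} |A(x,y)| ≤ σ_F(2x)/(1−δ). -/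
open MeasureTheory Set Filter

lemma setIntegral_shift (f : ℝ → ℝ) (x y : ℝ) :
    (∫ t in Set.Ioi x, f (t + y)) = ∫ t in Set.Ioi (x + y), f t := by
  have mp : MeasurePreserving (fun t : ℝ => t + y) volume volume :=
    measurePreserving_add_right volume y
  have emb : MeasurableEmbedding (fun t : ℝ => t + y) :=
    (MeasurableEquiv.addRight y).measurableEmbedding
  have hpre : (fun t : ℝ => t + y) ⁻¹' Set.Ioi (x + y) = Set.Ioi x := by
    ext t; simp
  have := mp.setIntegral_preimage_emb emb f (Set.Ioi (x + y))
  rw [hpre] at this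
  exact this

lemma integrableOn_shift {f : ℝ → ℝ} {x y : ℝ}
    (h : IntegrableOn f (Set.Ioi (x + y))) :
    IntegrableOn (fun t => f (t + y)) (Set.Ioi x) := by
  have mp : MeasurePreserving (fun t : ℝ => t + y) volume volume :=
    measurePreserving_add_right volume y
  have emb : MeasurableEmbedding (fun t : ℝ => t + y) :=
    (MeasurableEquiv.addRight y).measurableEmbedding
  have hpre : (fun t : ℝ => t + y) ⁻¹' Set.Ioi (x + y) = Set.Ioi x := by
    ext t; simp
  have := (mp.integrableOn_comp_preimage emb (f := f) (s := Set.Ioi (x + y))).2 h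
  rwa [hpre] at this

/-- if `σ_{1F}(2x₀) ≤ δ < 1`, `x ≥ x₀ ≥ 0`, and a bounded measurable
`A = A(x,·)` satisfies the Marchenko equation for all `y ≥ x`, then
`σ_A(x) = sup_{y ≥ x}|A(x,y)| ≤ σ_F(2x)/(1−δ)`. -/
theorem marchenko_sup_bound
    (F : ℝ → ℝ) (hFmeas : Measurable F)
    (hFbdd : ∀ x > (0 : ℝ), BddAbove ((fun y => |F y|) '' Set.Ici x))
    (δ x₀ : ℝ) (hδ0 : 0 ≤ δ) (hδ1 : δ < 1) (hx₀ : 0 ≤ x₀)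
    (hσint : IntegrableOn (sigmaF F) (Set.Ioi (2 * x₀)))
    (hsmall : (∫ y in Set.Ioi (2 * x₀), sigmaF F y) ≤ δ)
    (x : ℝ) (hx : x₀ ≤ x)
    (A : ℝ → ℝ) (hAmeas : Measurable A)
    (hAbdd : BddAbove ((fun y => |A y|) '' Set.Ici x))
    (heq : ∀ y ≥ x, A y + ∫ t in Set.Ioi x, A t * F (t + y) = -F (x + y)) :
    sSup ((fun y => |A y|) '' Set.Ici x) ≤ sigmaF F (2 * x) / (1 - δ) := by
  set M := sSup ((fun y => |A y|) '' Set.Ici x) with hM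
  have hMnonneg : 0 ≤ M := by
    apply Real.sSup_nonneg
    rintro _ ⟨y, _, rfl⟩; exact abs_nonneg _
  have hxnn : 0 ≤ x := hx₀.trans hx
  have hAle : ∀ t, x ≤ t → |A t| ≤ M := fun t ht => le_csSup hAbdd ⟨t, ht, rfl⟩
  have hσnonneg : ∀ z : ℝ, 0 ≤ sigmaF F z := by
    intro z
    apply Real.sSup_nonneg
    rintro _ ⟨y, _, rfl⟩; exact abs_nonneg _
  have hFle : ∀ z : ℝ, 0 < z → |F z| ≤ sigmaF F z := fun z hz =>
    le_csSup (hFbdd z hz) ⟨z, le_refl z, rfl⟩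
  -- key integral estimate
  have key : ∀ y, x ≤ y →
      |∫ t in Set.Ioi x, A t * F (t + y)| ≤ δ * M := by
    intro y hy
    have hsub : Set.Ioi (x + y) ⊆ Set.Ioi (2 * x₀) := fun t ht => by
      simp only [Set.mem_Ioi] at *; linarith
    have hσint' : IntegrableOn (sigmaF F) (Set.Ioi (x + y)) :=
      hσint.mono_set hsub
    have hg_int : IntegrableOn (fun t => sigmaF F (t + y)) (Set.Ioi x) :=
      integrableOn_shift hσint'
    have hgM_int : IntegrableOn (fun t => M * sigmaF F (t + y)) (Set.Ioi x) :=
      hg_int.const_mul M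
    have hbound : ∀ᵐ t ∂(volume.restrict (Set.Ioi x)),
        ‖A t * F (t + y)‖ ≤ M * sigmaF F (t + y) := by
      refine (ae_restrict_iff' measurableSet_Ioi).2 (Filter.Eventually.of_forall ?_)
      intro t ht
      simp only [Set.mem_Ioi] at ht
      have htz : 0 < t + y := by linarith
      have h1 : |A t| ≤ M := hAle t ht.le
      have h2 : |F (t + y)| ≤ sigmaF F (t + y) := hFle _ htz
      calc ‖A t * F (t + y)‖ = |A t| * |F (t + y)| := abs_mul _ _
        _ ≤ M * sigmaF F (t + y) :=
          mul_le_mul h1 h2 (abs_nonneg _) hMnonneg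
    have hmeas : AEStronglyMeasurable (fun t => A t * F (t + y))
        (volume.restrict (Set.Ioi x)) :=
      (hAmeas.mul (hFmeas.comp (measurable_id.add_const y))).aestronglyMeasurable
    have hnorm : ‖∫ t in Set.Ioi x, A t * F (t + y)‖ ≤
        ∫ t in Set.Ioi x, M * sigmaF F (t + y) :=
      norm_integral_le_of_norm_le hgM_int hbound
    have hshift : (∫ t in Set.Ioi x, sigmaF F (t + y)) = ∫ t in Set.Ioi (x + y), sigmaF F t :=
      setIntegral_shift (sigmaF F) x y
    have hmono : (∫ t in Set.Ioi (x + y), sigmaF F t) ≤ ∫ t in Set.Ioi (2 * x₀), sigmaF F t := by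
      apply setIntegral_mono_set hσint
      · exact (ae_restrict_iff' measurableSet_Ioi).2
          (Filter.Eventually.of_forall fun t _ => hσnonneg t)
      · exact HasSubset.Subset.eventuallyLE hsub
    have : (∫ t in Set.Ioi x, M * sigmaF F (t + y)) = M * ∫ t in Set.Ioi (x + y), sigmaF F t := by
      rw [integral_const_mul, hshift]
    calc |∫ t in Set.Ioi x, A t * F (t + y)| ≤ ∫ t in Set.Ioi x, M * sigmaF F (t + y) := hnorm
      _ = M * ∫ t in Set.Ioi (x + y), sigmaF F t := this
      _ ≤ M * δ := mul_le_mul_of_nonneg_left (hmono.trans hsmall) hMnonneg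
      _ = δ * M := mul_comm _ _
  -- the set defining sigmaF F (2x) is bounded above
  have hSbdd : BddAbove ((fun y => |F y|) '' Set.Ici (2 * x)) := by
    refine ⟨M + δ * M, ?_⟩
    rintro _ ⟨z, hz, rfl⟩
    simp only [Set.mem_Ici] at hz
    have hy : x ≤ z - x := by linarith
    have h := heq (z - x) hy
    have hz' : x + (z - x) = z := by ring
    rw [hz'] at h
    have : F z = -(A (z - x) + ∫ t in Set.Ioi x, A t * F (t + (z - x))) := by linarith
    calc |F z| ≤ |A (z - x)| + |∫ t in Set.Ioi x, A t * F (t + (z - x))| := by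
          rw [this, abs_neg]; exact abs_add_le _ _
      _ ≤ M + δ * M := add_le_add (hAle _ hy) (key _ hy)
  -- main estimate
  have hmain : ∀ y, x ≤ y → |A y| ≤ sigmaF F (2 * x) + δ * M := by
    intro y hy
    have h := heq y hy
    have hA : A y = -F (x + y) - ∫ t in Set.Ioi x, A t * F (t + y) := by linarith
    have hFS : |F (x + y)| ≤ sigmaF F (2 * x) :=
      le_csSup hSbdd ⟨x + y, by simp only [Set.mem_Ici]; linarith, rfl⟩
    calc |A y| ≤ |F (x + y)| + |∫ t in Set.Ioi x, A t * F (t + y)| := by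
          rw [hA]; exact (abs_sub _ _).trans (by rw [abs_neg])
      _ ≤ sigmaF F (2 * x) + δ * M := add_le_add hFS (key y hy)
  have hMle : M ≤ sigmaF F (2 * x) + δ * M := by
    refine csSup_le ⟨|A x|, ⟨x, le_refl x, rfl⟩⟩ ?_
    rintro _ ⟨y, hy, rfl⟩
    exact hmain y hy
  rw [le_div_iff₀ (by linarith : (0:ℝ) < 1 - δ)]
  nlinarith
end

section
/- Let F : (0,∞) → ℝ be measurable with σ_F(x) := sup_{y ≥ x} |F(y)| finite for all x > 0, let 0 ≤ δ < 1 and x₀ ≥ 0 with σ_{1F}(2x₀) ≤ δ, where σ_{1F}(x) := ∫_x^∞ σ_F(y) dy. Fix x ≥ x₀ and suppose A(x,·) ∈ L¹(x,∞) satisfies the Marchenko equation A(x,y) + ∫_x^∞ A(x,t) F(t+y) dt = −F(x+y) for almost every y ≥ x. Then σ_{1A}(x) := ∫_x^∞ |A(x,s)| ds ≤ σ_{1F}(2x)/(1−δ). -/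
open MeasureTheory Set Filter

lemma sigmaF_nonneg (F : ℝ → ℝ) (x : ℝ) : 0 ≤ sigmaF F x :=
  Real.sSup_nonneg (by rintro v ⟨y, -, rfl⟩; exact abs_nonneg _)

lemma abs_le_sigmaF_s3 (F : ℝ → ℝ) {w z : ℝ}
    (hb : BddAbove ((fun y => |F y|) '' Set.Ici w)) (h : w ≤ z) :
    |F z| ≤ sigmaF F w :=
  le_csSup hb ⟨z, h, rfl⟩

/-- if `σ_{1F}(2x₀) ≤ δ < 1`, `x ≥ x₀ ≥ 0`, and `A = A(x,·) ∈ L¹(x,∞)`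
satisfies the Marchenko equation for a.e. `y ≥ x`, then
`σ_{1A}(x) = ∫_x^∞ |A(x,s)| ds ≤ σ_{1F}(2x)/(1−δ)`. -/
theorem marchenko_L1_bound
    (F : ℝ → ℝ) (hFmeas : Measurable F)
    (hFbdd : ∀ x > (0 : ℝ), BddAbove ((fun y => |F y|) '' Set.Ici x))
    (δ x₀ : ℝ) (hδ0 : 0 ≤ δ) (hδ1 : δ < 1) (hx₀ : 0 ≤ x₀)
    (hσint : IntegrableOn (sigmaF F) (Set.Ioi (2 * x₀)))
    (hsmall : (∫ y in Set.Ioi (2 * x₀), sigmaF F y) ≤ δ)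
    (x : ℝ) (hx : x₀ ≤ x)
    (A : ℝ → ℝ) (hAint : IntegrableOn A (Set.Ioi x))
    (heq : ∀ᵐ y ∂(volume.restrict (Set.Ioi x)),
      A y + ∫ t in Set.Ioi x, A t * F (t + y) = -F (x + y)) :
    (∫ s in Set.Ioi x, |A s|) ≤ (∫ y in Set.Ioi (2 * x), sigmaF F y) / (1 - δ) := by
  have hx0 : (0 : ℝ) ≤ x := le_trans hx₀ hx
  have h2x : 2 * x₀ ≤ 2 * x := by linarith
  set I := ∫ s in Set.Ioi x, |A s| with hIdef
  set S := ∫ y in Set.Ioi (2 * x), sigmaF F y with hSdef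
  have hσnn : ∀ y, 0 ≤ sigmaF F y := sigmaF_nonneg F
  have hσint2x : IntegrableOn (sigmaF F) (Set.Ioi (2 * x)) :=
    hσint.mono_set (Set.Ioi_subset_Ioi h2x)
  have hSδ : S ≤ δ := by
    refine le_trans ?_ hsmall
    exact setIntegral_mono_set hσint (Filter.Eventually.of_forall fun y => hσnn y)
      (HasSubset.Subset.eventuallyLE (Set.Ioi_subset_Ioi h2x))
  have hS0 : 0 ≤ S := setIntegral_nonneg measurableSet_Ioi fun y _ => hσnn y
  -- translation map
  have hemb : MeasurableEmbedding (fun y : ℝ => x + y) :=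
    (Homeomorph.addLeft x).measurableEmbedding
  have hpre : (fun y : ℝ => x + y) ⁻¹' (Set.Ioi (2 * x)) = Set.Ioi x := by
    ext y; simp only [Set.mem_preimage, Set.mem_Ioi]; constructor <;> intro h <;> linarith
  have hMP : MeasurePreserving (fun y : ℝ => x + y) volume volume :=
    measurePreserving_add_left volume x
  have hIcomp : IntegrableOn (fun y => sigmaF F (x + y)) (Set.Ioi x) := by
    have := (hMP.integrableOn_comp_preimage hemb (f := sigmaF F)
      (s := Set.Ioi (2 * x))).mpr hσint2x
    rwa [hpre] at this
  have hval : (∫ y in Set.Ioi x, sigmaF F (x + y)) = S := by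
    rw [← hpre]
    exact hMP.setIntegral_preimage_emb hemb (sigmaF F) (Set.Ioi (2 * x))
  -- key a.e. bound
  have key : ∀ᵐ y ∂(volume.restrict (Set.Ioi x)),
      |A y| ≤ sigmaF F (x + y) * (1 + I) := by
    filter_upwards [heq, ae_restrict_mem measurableSet_Ioi] with y hy hymem
    have hymem' : x < y := hymem
    have hxy : 0 < x + y := by linarith
    have hbA : BddAbove ((fun y' => |F y'|) '' Set.Ici (x + y)) := hFbdd _ hxy
    have h1 : |F (x + y)| ≤ sigmaF F (x + y) := abs_le_sigmaF_s3 F hbA le_rfl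
    have h2 : |∫ t in Set.Ioi x, A t * F (t + y)| ≤ sigmaF F (x + y) * I := by
      calc |∫ t in Set.Ioi x, A t * F (t + y)|
          ≤ ∫ t in Set.Ioi x, |A t| * |F (t + y)| := by
            simpa [abs_mul] using norm_integral_le_integral_norm
              (μ := volume.restrict (Set.Ioi x)) (fun t => A t * F (t + y))
        _ ≤ ∫ t in Set.Ioi x, |A t| * sigmaF F (x + y) := by
            apply integral_mono_of_nonneg
            · exact Filter.Eventually.of_forall fun t =>
                mul_nonneg (abs_nonneg _) (abs_nonneg _)
            · exact hAint.abs.mul_const _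
            · filter_upwards [ae_restrict_mem measurableSet_Ioi] with t ht
              have ht' : x < t := ht
              exact mul_le_mul_of_nonneg_left
                (abs_le_sigmaF_s3 F hbA (by linarith)) (abs_nonneg _)
        _ = I * sigmaF F (x + y) := integral_mul_const _ _
        _ = sigmaF F (x + y) * I := mul_comm _ _
    have hAy : A y = -F (x + y) - ∫ t in Set.Ioi x, A t * F (t + y) := by linarith
    calc |A y| = |(-F (x + y)) - ∫ t in Set.Ioi x, A t * F (t + y)| := by rw [hAy]
      _ ≤ |(-F (x + y))| + |∫ t in Set.Ioi x, A t * F (t + y)| := abs_sub _ _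
      _ ≤ sigmaF F (x + y) + sigmaF F (x + y) * I := by
          rw [abs_neg]; exact add_le_add h1 h2
      _ = sigmaF F (x + y) * (1 + I) := by ring
  have hmain : I ≤ S * (1 + I) := by
    calc I ≤ ∫ y in Set.Ioi x, sigmaF F (x + y) * (1 + I) :=
          integral_mono_ae hAint.abs (hIcomp.mul_const _) key
      _ = (∫ y in Set.Ioi x, sigmaF F (x + y)) * (1 + I) := integral_mul_const _ _
      _ = S * (1 + I) := by rw [hval]
  have hI0 : 0 ≤ I := setIntegral_nonneg measurableSet_Ioi fun s _ => abs_nonneg _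
  have hSI : S * I ≤ δ * I := mul_le_mul_of_nonneg_right hSδ hI0
  rw [le_div_iff₀ (by linarith : (0:ℝ) < 1 - δ)]
  nlinarith [hmain, hSI]
end

section
/- Let a > 0 and let q : (0,∞) → ℝ be locally integrable with ∫_0^∞ (1+t)|q(t)| dt < ∞ and q(t) = 0 for almost every t > a. Suppose A : {(x,y) : 0 ≤ x ≤ y} → ℝ satisfies, with all integrals absolutely convergent, the Volterra equation A(x,y) = (1/2) ∫_{(x+y)/2}^∞ q(t) dt + ∫_{(x+y)/2}^∞ ∫_0^{(y−x)/2} q(s−t) A(s−t, s+t) dt ds for all y ≥ x ≥ 0. Then A(x,y) = 0 for all y ≥ x ≥ a. -/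
open MeasureTheory Set Filter

/-- if the potential `q` vanishes (a.e.) beyond `a` and
`A` satisfies the Volterra equation for the transformation kernel, with all integrals
absolutely convergent, then `A(x,y) = 0` for `y ≥ x ≥ a`. -/
theorem transformation_kernel_vanishes_for_compact_support
    (a : ℝ) (ha : 0 < a) (q : ℝ → ℝ)
    (hq : IntegrableOn (fun t => (1 + t) * |q t|) (Set.Ioi 0))
    (hqsupp : ∀ᵐ t ∂(volume.restrict (Set.Ioi a)), q t = 0)
    (A : ℝ → ℝ → ℝ)
    (habs : ∀ x y : ℝ, 0 ≤ x → x ≤ y →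
      IntegrableOn (fun p : ℝ × ℝ => q (p.1 - p.2) * A (p.1 - p.2) (p.1 + p.2))
        ((Set.Ioi ((x + y) / 2)) ×ˢ (Set.Ioc 0 ((y - x) / 2))))
    (heq : ∀ x y : ℝ, 0 ≤ x → x ≤ y →
      A x y = (1 / 2) * (∫ t in Set.Ioi ((x + y) / 2), q t)
        + ∫ s in Set.Ioi ((x + y) / 2),
            ∫ t in Set.Ioc (0 : ℝ) ((y - x) / 2), q (s - t) * A (s - t) (s + t)) :
    ∀ x y : ℝ, a ≤ x → x ≤ y → A x y = 0 := by
  intro x y hax hxy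
  have hx0 : (0:ℝ) ≤ x := le_of_lt (lt_of_lt_of_le ha hax)
  have hq0 : ∀ᵐ t ∂(volume : Measure ℝ), t ∈ Set.Ioi a → q t = 0 :=
    (ae_restrict_iff' measurableSet_Ioi).mp hqsupp
  have hm : a ≤ (x + y) / 2 := by linarith
  have h1 : (∫ t in Set.Ioi ((x + y) / 2), q t) = 0 := by
    apply integral_eq_zero_of_ae
    filter_upwards [ae_restrict_of_ae hq0,
      ae_restrict_mem (measurableSet_Ioi : MeasurableSet (Set.Ioi ((x + y) / 2)))] with t h1 h2
    exact h1 (lt_of_le_of_lt hm h2)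
  have h2 : Set.EqOn (fun s => ∫ t in Set.Ioc (0 : ℝ) ((y - x) / 2),
      q (s - t) * A (s - t) (s + t)) (fun _ => (0:ℝ)) (Set.Ioi ((x + y) / 2)) := by
    intro s hs
    simp only
    apply integral_eq_zero_of_ae
    have hmp : MeasurePreserving (fun t : ℝ => s - t) volume volume :=
      Measure.measurePreserving_sub_left volume s
    have hcomp : ∀ᵐ t ∂(volume : Measure ℝ), s - t ∈ Set.Ioi a → q (s - t) = 0 :=
      hmp.quasiMeasurePreserving.ae hq0
    filter_upwards [ae_restrict_of_ae hcomp,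
      ae_restrict_mem (measurableSet_Ioc : MeasurableSet (Set.Ioc (0:ℝ) ((y - x) / 2)))]
      with t h1 h2
    have hst : s - t ∈ Set.Ioi a := by
      simp only [Set.mem_Ioi] at hs ⊢
      have := h2.2
      linarith [h2.1]
    simp [h1 hst]
  have h3 : (∫ s in Set.Ioi ((x + y) / 2),
      ∫ t in Set.Ioc (0 : ℝ) ((y - x) / 2), q (s - t) * A (s - t) (s + t)) = 0 := by
    rw [setIntegral_congr_fun measurableSet_Ioi h2, integral_zero]
  rw [heq x y hx0 hxy, h1, h3]
  ring
end

section
/- Let σ : (0,∞) → [0,∞) be nonincreasing and integrable, let c > 0, and let A : {(x,y) : 0 ≤ x ≤ y} → ℝ be measurable with |A(x,y)| ≤ c·σ((x+y)/2) for all y ≥ x ≥ 0. Fix x ≥ 0. Then for every F ∈ L¹(2x,∞), the function z ↦ ∫_z^∞ A(x, v+x−z) F(v) dv belongs to L¹(2x,∞) and ∫_{2x}^∞ | ∫_z^∞ A(x, v+x−z) F(v) dv | dz ≤ 2c (∫_x^∞ σ(t) dt) · ∫_{2x}^∞ |F(v)| dv. -/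
/-!
Write `k u = A (x, u + x)` for `u > 0`. For `z > 2x` the operator is
`(BF)(z) = ∫_{v > z} k (v - z) F v dv`, the convolution of `F` (extended by zero outside
`(2x, ∞)`) with the reflection of `k` (extended by zero outside `(0, ∞)`); Young's inequality in
`L¹` gives `‖BF‖₁ ≤ ‖k‖₁ ‖F‖₁`. The hypothesis on `A` reads `|k u| ≤ c σ (x + u / 2)`, and the
substitution `t = x + u / 2` gives `‖k‖₁ ≤ 2c ∫_x^∞ σ`.
-/

open MeasureTheory Set Filter
open scoped Convolution

theorem integral_abs_convolution_mul_le {G : Type*} [AddGroup G] [MeasurableSpace G]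
    [MeasurableAdd₂ G] [MeasurableNeg G] {μ : Measure G} [SFinite μ] [μ.IsAddRightInvariant]
    {f g : G → ℝ} (hf : Integrable f μ) (hg : Integrable g μ) :
    ∫ z, |(f ⋆[ContinuousLinearMap.mul ℝ ℝ, μ] g) z| ∂μ ≤ (∫ t, |f t| ∂μ) * ∫ t, |g t| ∂μ := by
  set L := ContinuousLinearMap.mul ℝ ℝ
  have habs : ∀ z, |(f ⋆[L, μ] g) z| ≤ ((fun t => |f t|) ⋆[L, μ] fun t => |g t|) z := fun z =>
    calc |(f ⋆[L, μ] g) z| ≤ ∫ t, |f t * g (z - t)| ∂μ := abs_integral_le_integral_abs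
      _ = _ := by simp only [convolution_def, L, ContinuousLinearMap.mul_apply', abs_mul]
  calc ∫ z, |(f ⋆[L, μ] g) z| ∂μ ≤ ∫ z, ((fun t => |f t|) ⋆[L, μ] fun t => |g t|) z ∂μ :=
        integral_mono_of_nonneg (.of_forall fun _ => abs_nonneg _)
          (hf.abs.integrable_convolution L hg.abs) (.of_forall habs)
    _ = _ := integral_convolution L hf.abs hg.abs

section OneSidedKernel
variable {k F : ℝ → ℝ} {a : ℝ}

theorem setIntegral_Ioi_mul_eq_convolution {z : ℝ} (hz : a ≤ z) :
    ∫ v in Ioi z, k (v - z) * F v =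
      ((Ioi a).indicator F ⋆[ContinuousLinearMap.mul ℝ ℝ]
        fun u => (Ioi 0).indicator k (-u)) z := by
  rw [convolution_def, ← integral_indicator measurableSet_Ioi]
  congr 1 with v
  by_cases hv : z < v
  · simp [hv, hz.trans_lt hv, mul_comm]
  · simp [hv]

theorem integral_abs_indicator_Ioi : ∫ t, |(Ioi a).indicator F t| = ∫ t in Ioi a, |F t| := by
  simp_rw [← Real.norm_eq_abs, norm_indicator_eq_indicator_norm]
  exact integral_indicator measurableSet_Ioi

theorem integrableOn_setIntegral_Ioi_mul (hk : IntegrableOn k (Ioi 0))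
    (hF : IntegrableOn F (Ioi a)) :
    IntegrableOn (fun z => ∫ v in Ioi z, k (v - z) * F v) (Ioi a) :=
  (((integrable_indicator_iff measurableSet_Ioi).2 hF).integrable_convolution _
      ((integrable_indicator_iff measurableSet_Ioi).2 hk).comp_neg).integrableOn.congr_fun
    (fun _ hz => (setIntegral_Ioi_mul_eq_convolution (le_of_lt hz)).symm) measurableSet_Ioi

theorem integral_abs_setIntegral_Ioi_mul_le (hk : IntegrableOn k (Ioi 0))
    (hF : IntegrableOn F (Ioi a)) :
    ∫ z in Ioi a, |∫ v in Ioi z, k (v - z) * F v| ≤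
      (∫ u in Ioi 0, |k u|) * ∫ v in Ioi a, |F v| := by
  have hFa := (integrable_indicator_iff measurableSet_Ioi).2 hF
  have hk0 := ((integrable_indicator_iff measurableSet_Ioi).2 hk).comp_neg
  calc ∫ z in Ioi a, |∫ v in Ioi z, k (v - z) * F v|
      = ∫ z in Ioi a, |((Ioi a).indicator F ⋆[ContinuousLinearMap.mul ℝ ℝ]
          fun u => (Ioi 0).indicator k (-u)) z| :=
        setIntegral_congr_fun measurableSet_Ioi fun z hz => by
          rw [setIntegral_Ioi_mul_eq_convolution (le_of_lt hz)]
    _ ≤ ∫ z, |((Ioi a).indicator F ⋆[ContinuousLinearMap.mul ℝ ℝ]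
          fun u => (Ioi 0).indicator k (-u)) z| :=
        setIntegral_le_integral (hFa.integrable_convolution _ hk0).abs
          (.of_forall fun _ => abs_nonneg _)
    _ ≤ (∫ t, |(Ioi a).indicator F t|) * ∫ u, |(Ioi 0).indicator k (-u)| :=
        integral_abs_convolution_mul_le hFa hk0
    _ = (∫ u in Ioi 0, |k u|) * ∫ v in Ioi a, |F v| := by
        rw [integral_neg_eq_self (fun u => |(Ioi 0).indicator k u|), integral_abs_indicator_Ioi,
          integral_abs_indicator_Ioi, mul_comm]

end OneSidedKernel

section Affine
variable {E : Type*} [NormedAddCommGroup E] (g : ℝ → E) (a : ℝ) {b : ℝ}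

theorem integrableOn_Ioi_comp_add_right_iff :
    IntegrableOn (fun u => g (u + a)) (Ioi 0) ↔ IntegrableOn g (Ioi a) := by
  have hpre : (· + a) ⁻¹' Ioi a = Ioi (0 : ℝ) := by ext u; simp
  rw [← hpre]
  exact (measurePreserving_add_right volume a).integrableOn_comp_preimage
    (measurableEmbedding_addRight a)

theorem integrableOn_Ioi_comp_mul_add_iff (hb : 0 < b) :
    IntegrableOn (fun u => g (b * u + a)) (Ioi 0) ↔ IntegrableOn g (Ioi a) := by
  rw [integrableOn_Ioi_comp_mul_left_iff (fun t => g (t + a)) 0 hb, mul_zero,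
    integrableOn_Ioi_comp_add_right_iff]

variable [NormedSpace ℝ E]

theorem integral_comp_add_right_Ioi : ∫ u in Ioi 0, g (u + a) = ∫ t in Ioi a, g t := by
  have hpre : (· + a) ⁻¹' Ioi a = Ioi (0 : ℝ) := by ext u; simp
  rw [← hpre]
  exact (measurePreserving_add_right volume a).setIntegral_preimage_emb
    (measurableEmbedding_addRight a) g _

theorem integral_comp_mul_add_Ioi (hb : 0 < b) :
    ∫ u in Ioi 0, g (b * u + a) = b⁻¹ • ∫ t in Ioi a, g t := by
  rw [integral_comp_mul_left_Ioi (fun t => g (t + a)) 0 hb, mul_zero,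
    integral_comp_add_right_Ioi]

end Affine

section KernelBound
variable {σ κ : ℝ → ℝ} {c x : ℝ}

theorem abs_comp_add_le_of_abs_le (hbound : ∀ y, x ≤ y → |κ y| ≤ c * σ ((x + y) / 2)) {u : ℝ}
    (hu : 0 ≤ u) : |κ (u + x)| ≤ c * σ (2⁻¹ * u + x) := by
  convert hbound (u + x) (by linarith) using 3
  ring

theorem integrableOn_comp_add_Ioi_of_abs_le (hσ : IntegrableOn σ (Ioi x)) (hκ : Measurable κ)
    (hbound : ∀ y, x ≤ y → |κ y| ≤ c * σ ((x + y) / 2)) :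
    IntegrableOn (fun u => κ (u + x)) (Ioi 0) :=
  Integrable.mono' (((integrableOn_Ioi_comp_mul_add_iff σ x (by norm_num)).2 hσ).const_mul c)
    (hκ.comp (measurable_add_const x)).aestronglyMeasurable
    (ae_restrict_of_forall_mem measurableSet_Ioi fun _ hu =>
      abs_comp_add_le_of_abs_le hbound (le_of_lt hu))

theorem integral_abs_comp_add_Ioi_le (hσ : IntegrableOn σ (Ioi x)) (hκ : Measurable κ)
    (hbound : ∀ y, x ≤ y → |κ y| ≤ c * σ ((x + y) / 2)) :
    ∫ u in Ioi 0, |κ (u + x)| ≤ 2 * c * ∫ t in Ioi x, σ t :=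
  calc ∫ u in Ioi 0, |κ (u + x)| ≤ ∫ u in Ioi 0, c * σ (2⁻¹ * u + x) :=
        setIntegral_mono_on (integrableOn_comp_add_Ioi_of_abs_le hσ hκ hbound).abs
          (((integrableOn_Ioi_comp_mul_add_iff σ x (by norm_num)).2 hσ).const_mul c)
          measurableSet_Ioi fun _ hu => abs_comp_add_le_of_abs_le hbound (le_of_lt hu)
    _ = 2 * c * ∫ t in Ioi x, σ t := by
        rw [integral_const_mul, integral_comp_mul_add_Ioi σ x (by norm_num), smul_eq_mul]
        ring

end KernelBound

theorem B_operator_L1_bound_general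
    (σ : ℝ → ℝ)
    (hσint : IntegrableOn σ (Set.Ioi 0))
    (c : ℝ)
    (A : ℝ → ℝ → ℝ) (hAmeas : Measurable (Function.uncurry A))
    (hAbound : ∀ x y : ℝ, 0 ≤ x → x ≤ y → |A x y| ≤ c * σ ((x + y) / 2))
    (x : ℝ) (hx : 0 ≤ x) :
    ∀ F : ℝ → ℝ, IntegrableOn F (Set.Ioi (2 * x)) →
      IntegrableOn (fun z => ∫ v in Set.Ioi z, A x (v + x - z) * F v) (Set.Ioi (2 * x)) ∧
      (∫ z in Set.Ioi (2 * x), |∫ v in Set.Ioi z, A x (v + x - z) * F v|) ≤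
        2 * c * (∫ t in Set.Ioi x, σ t) * ∫ v in Set.Ioi (2 * x), |F v| := by
  intro F hF
  have hσ : IntegrableOn σ (Ioi x) := hσint.mono_set (Ioi_subset_Ioi hx)
  have hA : Measurable (A x) := hAmeas.comp measurable_prodMk_left
  have hbound : ∀ y, x ≤ y → |A x y| ≤ c * σ ((x + y) / 2) := fun y => hAbound x y hx
  have hk := integrableOn_comp_add_Ioi_of_abs_le hσ hA hbound
  simp_rw [← sub_add_eq_add_sub]
  refine ⟨integrableOn_setIntegral_Ioi_mul hk hF, ?_⟩
  calc _ ≤ (∫ u in Ioi 0, |A x (u + x)|) * ∫ v in Ioi (2 * x), |F v| :=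
        integral_abs_setIntegral_Ioi_mul_le hk hF
    _ ≤ 2 * c * (∫ t in Ioi x, σ t) * ∫ v in Ioi (2 * x), |F v| :=
        mul_le_mul_of_nonneg_right (integral_abs_comp_add_Ioi_le hσ hA hbound)
          (integral_nonneg fun _ => abs_nonneg _)

/-- the operator `(BF)(z) = ∫_z^∞ A(x, v+x−z) F(v) dv` maps `L¹(2x,∞)`
into itself with norm bound `2c ∫_x^∞ σ(t) dt`, when `|A(x,y)| ≤ c σ((x+y)/2)`. -/
theorem B_operator_L1_bound
    (σ : ℝ → ℝ) (hσnn : ∀ t > (0 : ℝ), 0 ≤ σ t)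
    (hσmono : AntitoneOn σ (Set.Ioi 0))
    (hσint : IntegrableOn σ (Set.Ioi 0))
    (c : ℝ) (hc : 0 < c)
    (A : ℝ → ℝ → ℝ) (hAmeas : Measurable (Function.uncurry A))
    (hAbound : ∀ x y : ℝ, 0 ≤ x → x ≤ y → |A x y| ≤ c * σ ((x + y) / 2))
    (x : ℝ) (hx : 0 ≤ x) :
    ∀ F : ℝ → ℝ, IntegrableOn F (Set.Ioi (2 * x)) →
      IntegrableOn (fun z => ∫ v in Set.Ioi z, A x (v + x - z) * F v) (Set.Ioi (2 * x)) ∧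
      (∫ z in Set.Ioi (2 * x), |∫ v in Set.Ioi z, A x (v + x - z) * F v|) ≤
        2 * c * (∫ t in Set.Ioi x, σ t) * ∫ v in Set.Ioi (2 * x), |F v| :=
  B_operator_L1_bound_general σ hσint c A hAmeas hAbound x hx
end

section
/- Let σ : (0,∞) → [0,∞) be nonincreasing and integrable, c > 0, and A : {(x,y) : 0 ≤ x ≤ y} → ℝ measurable with |A(x,y)| ≤ c·σ((x+y)/2) for all y ≥ x ≥ 0. Then there exists x₀ ≥ 0 such that for every x ≥ x₀, namely whenever 2c ∫_x^∞ σ(t) dt < 1, and every g ∈ L¹(2x,∞), the equation F(z) + ∫_z^∞ A(x, v+x−z) F(v) dv = g(z) for almost every z ≥ 2x has exactly one solution F ∈ L¹(2x,∞). -/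
/-!
In the variables `z = x + y`, `v = s + y` the equation is `(I + B) F = g` on `L¹(2x, ∞)`, where `B`
is the integral operator with kernel `K(z, v) = A(x, v + x - z)` for `v > z` and `0` otherwise.
By Tonelli, the `L¹` operator norm of an integral operator is at most the supremum over `v` of the
`L¹` norms of the columns `K(·, v)`; the bound `|A(x, y)| ≤ c σ((x + y) / 2)` and the substitution
`t = (v + 2x - z) / 2` bound every column by `2c ∫_x^∞ σ`. This tail tends to `0`, so for large `x`
the map `F ↦ g - B F` is a contraction of `L¹`, and its fixed point is the unique solution.
-/

open MeasureTheory Set Filter Topology Function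
open scoped ENNReal NNReal

noncomputable section

section IntegralOperator

variable {α : Type*} [MeasurableSpace α] {μ : Measure α}
  {K : α → α → ℝ} {k : ℝ≥0} {f f' g : α → ℝ}

def integralOperator (μ : Measure α) (K : α → α → ℝ) (f : α → ℝ) (z : α) : ℝ :=
  ∫ v, K z v * f v ∂μ

theorem integralOperator_congr_ae (h : f =ᵐ[μ] f') :
    integralOperator μ K f = integralOperator μ K f' :=
  funext fun _ => integral_congr_ae (h.mono fun v hv => by simp only [hv])

variable (hKm : AEStronglyMeasurable (uncurry K) (μ.prod μ))
include hKm

theorem aestronglyMeasurable_kernel_mul (hf : AEStronglyMeasurable f μ) :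
    AEStronglyMeasurable (fun p : α × α => K p.1 p.2 * f p.2) (μ.prod μ) :=
  hKm.mul hf.comp_snd

variable [SFinite μ] (hK : ∀ v, ∫⁻ z, ‖K z v‖ₑ ∂μ ≤ k)
include hK

theorem lintegral_enorm_kernel_mul_le (hf : AEStronglyMeasurable f μ) :
    ∫⁻ p, ‖K p.1 p.2 * f p.2‖ₑ ∂(μ.prod μ) ≤ k * ∫⁻ v, ‖f v‖ₑ ∂μ := by
  rw [lintegral_prod_symm _ (aestronglyMeasurable_kernel_mul hKm hf).enorm,
    ← lintegral_const_mul' _ _ ENNReal.coe_ne_top]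
  refine lintegral_mono fun v => ?_
  simp only [enorm_mul]
  rw [lintegral_mul_const' _ _ enorm_ne_top]
  exact mul_le_mul_left (hK v) _

theorem integrable_kernel_mul (hf : Integrable f μ) :
    Integrable (fun p : α × α => K p.1 p.2 * f p.2) (μ.prod μ) :=
  ⟨aestronglyMeasurable_kernel_mul hKm hf.1, (lintegral_enorm_kernel_mul_le hKm hK hf.1).trans_lt
    (ENNReal.mul_lt_top ENNReal.coe_lt_top hf.2)⟩

theorem integrable_integralOperator (hf : Integrable f μ) :
    Integrable (integralOperator μ K f) μ :=
  (integrable_kernel_mul hKm hK hf).integral_prod_left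

theorem lintegral_enorm_integralOperator_le (hf : AEStronglyMeasurable f μ) :
    ∫⁻ z, ‖integralOperator μ K f z‖ₑ ∂μ ≤ k * ∫⁻ v, ‖f v‖ₑ ∂μ :=
  calc ∫⁻ z, ‖integralOperator μ K f z‖ₑ ∂μ ≤ ∫⁻ z, ∫⁻ v, ‖K z v * f v‖ₑ ∂μ ∂μ :=
        lintegral_mono fun _ => enorm_integral_le_lintegral_enorm _
    _ = ∫⁻ p, ‖K p.1 p.2 * f p.2‖ₑ ∂(μ.prod μ) :=
        (lintegral_prod _ (aestronglyMeasurable_kernel_mul hKm hf).enorm).symm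
    _ ≤ k * ∫⁻ v, ‖f v‖ₑ ∂μ := lintegral_enorm_kernel_mul_le hKm hK hf

theorem integralOperator_sub_ae (hf : Integrable f μ) (hf' : Integrable f' μ) :
    integralOperator μ K (f - f') =ᵐ[μ] integralOperator μ K f - integralOperator μ K f' := by
  filter_upwards [(integrable_kernel_mul hKm hK hf).prod_right_ae,
    (integrable_kernel_mul hKm hK hf').prod_right_ae] with z hz hz'
  simp only [integralOperator, Pi.sub_apply, mul_sub]
  exact integral_sub hz hz'

def integralOperatorL1 (F : α →₁[μ] ℝ) : α →₁[μ] ℝ :=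
  (integrable_integralOperator hKm hK (L1.integrable_coeFn F)).toL1 _

theorem coeFn_integralOperatorL1 (F : α →₁[μ] ℝ) :
    integralOperatorL1 hKm hK F =ᵐ[μ] integralOperator μ K F :=
  Integrable.coeFn_toL1 _

theorem lipschitzWith_integralOperatorL1 : LipschitzWith k (integralOperatorL1 hKm hK) := by
  intro F₁ F₂
  have hF₁ := L1.integrable_coeFn F₁
  have hF₂ := L1.integrable_coeFn F₂
  have hB : ⇑(integralOperatorL1 hKm hK F₁) - ⇑(integralOperatorL1 hKm hK F₂)
      =ᵐ[μ] integralOperator μ K (F₁ - F₂) := by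
    filter_upwards [coeFn_integralOperatorL1 hKm hK F₁, coeFn_integralOperatorL1 hKm hK F₂,
      integralOperator_sub_ae hKm hK hF₁ hF₂] with z h₁ h₂ h
    rw [Pi.sub_apply, h₁, h₂, h, Pi.sub_apply]
  rw [Lp.edist_def, Lp.edist_def, eLpNorm_congr_ae hB, eLpNorm_one_eq_lintegral_enorm,
    eLpNorm_one_eq_lintegral_enorm]
  exact lintegral_enorm_integralOperator_le hKm hK (hF₁.sub hF₂).1

theorem existsUnique_ae_add_integralOperator_eq (hk : k < 1) (hg : Integrable g μ) :
    ∃ F : α → ℝ, Integrable F μ ∧ (∀ᵐ z ∂μ, F z + integralOperator μ K F z = g z) ∧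
      ∀ F' : α → ℝ, Integrable F' μ → (∀ᵐ z ∂μ, F' z + integralOperator μ K F' z = g z) →
        F' =ᵐ[μ] F := by
  set Φ : (α →₁[μ] ℝ) → α →₁[μ] ℝ := fun F => hg.toL1 g - integralOperatorL1 hKm hK F
  have hΦ : ContractingWith k Φ :=
    ⟨hk, fun F₁ F₂ => (edist_sub_left _ _ _).trans_le
      (lipschitzWith_integralOperatorL1 hKm hK F₁ F₂)⟩
  have isFixedPt_iff {F : α →₁[μ] ℝ} :
      IsFixedPt Φ F ↔ ∀ᵐ z ∂μ, F z + integralOperator μ K F z = g z := by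
    have hΦF : Φ F =ᵐ[μ] g - integralOperator μ K F := by
      filter_upwards [Lp.coeFn_sub (hg.toL1 g) (integralOperatorL1 hKm hK F), hg.coeFn_toL1,
        coeFn_integralOperatorL1 hKm hK F] with z h h₁ h₂
      rw [h, Pi.sub_apply, h₁, h₂, Pi.sub_apply]
    rw [IsFixedPt, Lp.ext_iff]
    constructor
    · intro h
      filter_upwards [hΦF, h] with z h₁ h₂
      rw [← h₂, h₁, Pi.sub_apply, sub_add_cancel]
    · intro h
      filter_upwards [hΦF, h] with z h₁ h₂
      rw [h₁, Pi.sub_apply, ← h₂, add_sub_cancel_right]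
  refine ⟨_, L1.integrable_coeFn _, isFixedPt_iff.1 hΦ.fixedPoint_isFixedPt,
    fun F' hF' hF'eq => ?_⟩
  have hF'L1 : IsFixedPt Φ (hF'.toL1 F') := by
    rw [isFixedPt_iff, integralOperator_congr_ae hF'.coeFn_toL1]
    filter_upwards [hF'eq, hF'.coeFn_toL1] with z h h'
    rwa [h']
  exact hF'.coeFn_toL1.symm.trans (by rw [hΦ.fixedPoint_unique hF'L1])

end IntegralOperator

theorem tendsto_setIntegral_Ioi_atTop {μ : Measure ℝ} {f : ℝ → ℝ} {a : ℝ}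
    (hf : IntegrableOn f (Ioi a) μ) :
    Tendsto (fun x => ∫ t in Ioi x, f t ∂μ) atTop (𝓝 0) := by
  have hempty : ⋂ x : ℝ, Ioi x = ∅ :=
    eq_empty_of_forall_notMem fun t ht => lt_irrefl t (mem_iInter.1 ht t)
  simpa [hempty] using tendsto_setIntegral_of_antitone (fun _ => measurableSet_Ioi)
    (fun _ _ h => Ioi_subset_Ioi h) ⟨a, hf⟩

section Marchenko

variable {A : ℝ → ℝ → ℝ}

def marchenkoKernel (A : ℝ → ℝ → ℝ) (x z v : ℝ) : ℝ :=
  if z < v then A x (v + x - z) else 0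

theorem measurable_marchenkoKernel (hA : Measurable (uncurry A)) (x : ℝ) :
    Measurable (uncurry (marchenkoKernel A x)) :=
  Measurable.ite (measurableSet_lt measurable_fst measurable_snd)
    (hA.comp (measurable_const.prodMk ((measurable_snd.add_const x).sub measurable_fst)))
    measurable_const

theorem integralOperator_marchenkoKernel {x z : ℝ} (hz : 2 * x < z) (F : ℝ → ℝ) :
    integralOperator (volume.restrict (Ioi (2 * x))) (marchenkoKernel A x) F z
      = ∫ v in Ioi z, A x (v + x - z) * F v := by
  have h : ∀ v, marchenkoKernel A x z v * F v
      = (Ioi z).indicator (fun v => A x (v + x - z) * F v) v :=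
    fun v => by by_cases hv : z < v <;> simp [marchenkoKernel, hv]
  rw [integralOperator, funext h, integral_indicator measurableSet_Ioi,
    Measure.restrict_restrict measurableSet_Ioi, inter_eq_left.2 (Ioi_subset_Ioi hz.le)]

theorem lintegral_enorm_marchenkoKernel_le {σ : ℝ → ℝ} {c x : ℝ} (hc : 0 ≤ c)
    (hσnn : ∀ t > x, 0 ≤ σ t) (hσint : IntegrableOn σ (Ioi x))
    (hA : ∀ y, x ≤ y → |A x y| ≤ c * σ ((x + y) / 2)) (v : ℝ) :
    ∫⁻ z, ‖marchenkoKernel A x z v‖ₑ ≤ ENNReal.ofReal (2 * c * ∫ t in Ioi x, σ t) := by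
  set s := (Ioi x).indicator σ
  have hs : Integrable s := (integrable_indicator_iff measurableSet_Ioi).2 hσint
  have hs_nonneg : ∀ t, 0 ≤ s t := fun t => by
    by_cases ht : t ∈ Ioi x
    · simpa [s, ht] using hσnn t ht
    · simp [s, ht]
  have hpt : ∀ z, ‖marchenkoKernel A x z v‖ₑ ≤ ENNReal.ofReal (c * s ((v + 2 * x - z) / 2)) := by
    intro z
    by_cases hz : z < v
    · have hmem : (v + 2 * x - z) / 2 ∈ Ioi x := by simp only [mem_Ioi]; linarith
      rw [marchenkoKernel, if_pos hz, Real.enorm_eq_ofReal_abs,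
        show s _ = σ _ from indicator_of_mem hmem σ]
      refine ENNReal.ofReal_le_ofReal ((hA _ (by linarith)).trans_eq ?_)
      ring_nf
    · simp [marchenkoKernel, hz]
  have hint : Integrable (fun z => c * s ((v + 2 * x - z) / 2)) :=
    ((hs.comp_div two_ne_zero).comp_sub_left (v + 2 * x)).const_mul c
  calc ∫⁻ z, ‖marchenkoKernel A x z v‖ₑ
      ≤ ∫⁻ z, ENNReal.ofReal (c * s ((v + 2 * x - z) / 2)) := lintegral_mono hpt
    _ = ENNReal.ofReal (∫ z, c * s ((v + 2 * x - z) / 2)) :=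
        (ofReal_integral_eq_lintegral_ofReal hint
          (ae_of_all _ fun _ => mul_nonneg hc (hs_nonneg _))).symm
    _ = ENNReal.ofReal (2 * c * ∫ t in Ioi x, σ t) := by
        rw [integral_const_mul, integral_sub_left_eq_self (fun w => s (w / 2)),
          Measure.integral_comp_div, integral_indicator measurableSet_Ioi]
        simp only [abs_two, smul_eq_mul]
        ring_nf

end Marchenko

end

theorem A_to_F_unique_solvability_general
    (σ : ℝ → ℝ) (hσnn : ∀ t > (0 : ℝ), 0 ≤ σ t)
    (hσint : IntegrableOn σ (Set.Ioi 0))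
    (c : ℝ) (hc : 0 < c)
    (A : ℝ → ℝ → ℝ) (hAmeas : Measurable (Function.uncurry A))
    (hAbound : ∀ x y : ℝ, 0 ≤ x → x ≤ y → |A x y| ≤ c * σ ((x + y) / 2)) :
    ∃ x₀ : ℝ, 0 ≤ x₀ ∧ ∀ x : ℝ, x₀ ≤ x →
      (2 * c * (∫ t in Set.Ioi x, σ t) < 1) ∧
      ∀ g : ℝ → ℝ, IntegrableOn g (Set.Ioi (2 * x)) →
        ∃ F : ℝ → ℝ, IntegrableOn F (Set.Ioi (2 * x)) ∧
          (∀ᵐ z ∂(volume.restrict (Set.Ioi (2 * x))),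
            F z + ∫ v in Set.Ioi z, A x (v + x - z) * F v = g z) ∧
          ∀ F' : ℝ → ℝ, IntegrableOn F' (Set.Ioi (2 * x)) →
            (∀ᵐ z ∂(volume.restrict (Set.Ioi (2 * x))),
              F' z + ∫ v in Set.Ioi z, A x (v + x - z) * F' v = g z) →
            F' =ᵐ[volume.restrict (Set.Ioi (2 * x))] F := by
  have hsmall : ∀ᶠ x in atTop, 2 * c * (∫ t in Ioi x, σ t) < 1 :=
    ((tendsto_setIntegral_Ioi_atTop hσint).const_mul (2 * c)).eventually_lt_const (by simp)
  obtain ⟨x₀, hx₀⟩ := (hsmall.and (eventually_ge_atTop 0)).exists_forall_of_atTop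
  refine ⟨max x₀ 0, le_max_right _ _, fun x hx => ?_⟩
  obtain ⟨hk, hx⟩ := hx₀ x (le_of_max_le_left hx)
  refine ⟨hk, fun g hg => ?_⟩
  -- `ENNReal.ofReal r` is by definition `↑r.toNNReal`
  have hK : ∀ v, ∫⁻ z in Ioi (2 * x), ‖marchenkoKernel A x z v‖ₑ
      ≤ (2 * c * ∫ t in Ioi x, σ t).toNNReal := fun v =>
    (lintegral_mono' Measure.restrict_le_self le_rfl).trans <|
      lintegral_enorm_marchenkoKernel_le hc.le (fun t ht => hσnn t (hx.trans_lt ht))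
        (hσint.mono_set (Ioi_subset_Ioi hx)) (hAbound x · hx) v
  have hB : ∀ f, ∀ᵐ z ∂volume.restrict (Ioi (2 * x)),
      integralOperator _ (marchenkoKernel A x) f z = ∫ v in Ioi z, A x (v + x - z) * f v :=
    fun f => (ae_restrict_mem measurableSet_Ioi).mono fun z hz =>
      integralOperator_marchenkoKernel hz f
  obtain ⟨F, hF, hFeq, huniq⟩ := existsUnique_ae_add_integralOperator_eq
    (measurable_marchenkoKernel hAmeas x).aestronglyMeasurable hK (Real.toNNReal_lt_one.2 hk) hg
  refine ⟨F, hF, ?_, fun F' hF' hF'eq => huniq F' hF' ?_⟩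
  · filter_upwards [hFeq, hB F] with z h hBz
    rwa [← hBz]
  · filter_upwards [hF'eq, hB F'] with z h hBz
    rwa [hBz]

/-- step `A ⇒ F` of the inversion scheme: there is `x₀ ≥ 0` such that for
every `x ≥ x₀` one has `2c ∫_x^∞ σ(t) dt < 1`, and for every `g ∈ L¹(2x,∞)` the equation
`F(z) + ∫_z^∞ A(x, v+x−z) F(v) dv = g(z)` (a.e. `z ≥ 2x`) has exactly one solution
`F ∈ L¹(2x,∞)` (up to a.e. equality). -/
theorem A_to_F_unique_solvability
    (σ : ℝ → ℝ) (hσnn : ∀ t > (0 : ℝ), 0 ≤ σ t)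
    (hσmono : AntitoneOn σ (Set.Ioi 0))
    (hσint : IntegrableOn σ (Set.Ioi 0))
    (c : ℝ) (hc : 0 < c)
    (A : ℝ → ℝ → ℝ) (hAmeas : Measurable (Function.uncurry A))
    (hAbound : ∀ x y : ℝ, 0 ≤ x → x ≤ y → |A x y| ≤ c * σ ((x + y) / 2)) :
    ∃ x₀ : ℝ, 0 ≤ x₀ ∧ ∀ x : ℝ, x₀ ≤ x →
      (2 * c * (∫ t in Set.Ioi x, σ t) < 1) ∧
      ∀ g : ℝ → ℝ, IntegrableOn g (Set.Ioi (2 * x)) →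
        ∃ F : ℝ → ℝ, IntegrableOn F (Set.Ioi (2 * x)) ∧
          (∀ᵐ z ∂(volume.restrict (Set.Ioi (2 * x))),
            F z + ∫ v in Set.Ioi z, A x (v + x - z) * F v = g z) ∧
          ∀ F' : ℝ → ℝ, IntegrableOn F' (Set.Ioi (2 * x)) →
            (∀ᵐ z ∂(volume.restrict (Set.Ioi (2 * x))),
              F' z + ∫ v in Set.Ioi z, A x (v + x - z) * F' v = g z) →
            F' =ᵐ[volume.restrict (Set.Ioi (2 * x))] F :=
  A_to_F_unique_solvability_general σ hσnn hσint c hc A hAmeas hAbound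
end
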